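/- arXiv:math/0010276 — 3 statements merged into one kernel-verified Lean document; each statement's English description precedes it below -/
import Mathlib

section
/- In R = k[z_0,z_1,z_2,z_3], the ideal I = (z_1^2, z_2^2, z_1z_2 − z_3^2, z_1z_3, z_2z_3) defines a zero-dimensional scheme in P^3 of degree 5, i.e. dim_k (R/I)_d = 5 for all sufficiently large d. -/
open MvPolynomial

/-- The dimension of the degree-`d` graded piece of `R/I`, computed as
`dim_k R_d / (I ∩ R_d)`. -/
noncomputable def hilbertFn (k : Type*) [Field k] {σ : Type*} [Fintype σ]
    (I : Ideal (MvPolynomial σ k)) (d : ℕ) : ℕ :=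
  Module.finrank k
    (↥(homogeneousSubmodule σ k d) ⧸
      (Submodule.comap (homogeneousSubmodule σ k d).subtype (I.restrictScalars k)))

/-! For `d = n + 2`, every monomial of degree `d` is, modulo `I`, either `0` or one of the five
standard monomials `z₀ⁿ⁺², z₀ⁿ⁺¹z₁, z₀ⁿ⁺¹z₂, z₀ⁿ⁺¹z₃, z₀ⁿz₁z₂`: a monomial with `z₁²`, `z₂²`, `z₁z₃`
or `z₂z₃` lies in `I`, so does `z₃³ = z₂ · z₁z₃ - z₃ (z₁z₂ - z₃²)`, and `z₀ⁿz₃² ≡ z₀ⁿz₁z₂`.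
Hence the standard monomials span `(R/I)_d`. They are independent there because the five
coefficient functionals at `z₀ⁿ⁺², z₀ⁿ⁺¹z₁, z₀ⁿ⁺¹z₂, z₀ⁿ⁺¹z₃` and `z₀ⁿz₁z₂ + z₀ⁿz₃²` vanish on `I`
and are dual to them. -/

open Module Submodule in
theorem finrank_quotient_comap_subtype_eq_card {k M N ι : Type*} [Field k] [AddCommGroup M]
    [Module k M] [AddCommGroup N] [Module k N] [Fintype ι] {V W : Submodule k M} {b : ι → M}
    (hbV : ∀ i, b i ∈ V) (hV : V ≤ span k (Set.range b) ⊔ W) (φ : M →ₗ[k] N)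
    (hW : W ≤ LinearMap.ker φ) (hφb : LinearIndependent k (φ ∘ b)) :
    finrank k (V ⧸ W.comap V.subtype) = Fintype.card ι := by
  have hker : LinearMap.ker (W.mkQ ∘ₗ V.subtype) = W.comap V.subtype := by
    rw [LinearMap.ker_comp, ker_mkQ]
  have hrange : LinearMap.range (W.mkQ ∘ₗ V.subtype) = span k (Set.range (W.mkQ ∘ b)) := by
    rw [LinearMap.range_comp, range_subtype, Set.range_comp, ← map_span]
    refine le_antisymm ?_ (map_mono (span_le.mpr (Set.range_subset_iff.mpr hbV)))
    calc map W.mkQ V ≤ map W.mkQ (span k (Set.range b) ⊔ W) := map_mono hV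
      _ = map W.mkQ (span k (Set.range b)) := by
        rw [Submodule.map_sup, mkQ_map_self, sup_bot_eq]
  have hli : LinearIndependent k (W.mkQ ∘ b) := .of_comp (W.liftQ φ hW) hφb
  rw [← hker, (LinearMap.quotKerEquivRange _).finrank_eq, hrange, finrank_span_eq_card hli]

theorem span_restrictScalars_le_ker {k A N : Type*} [CommSemiring k] [CommSemiring A]
    [Algebra k A] [AddCommMonoid N] [Module k N] (φ : A →ₗ[k] N) {s : Set A}
    (h : ∀ g ∈ s, ∀ f, φ (f * g) = 0) : (Ideal.span s).restrictScalars k ≤ LinearMap.ker φ := by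
  intro p hp
  suffices ∀ f, φ (f * p) = 0 by simpa using this 1
  induction hp using Submodule.span_induction with
  | mem g hg => exact h g hg
  | zero => simp
  | add x y _ _ hx hy => simp [mul_add, hx, hy]
  | smul a x _ hx => intro f; rw [smul_eq_mul, ← mul_assoc]; exact hx _

theorem monomial_mem_of_le {σ R : Type*} [CommSemiring R] {I : Ideal (MvPolynomial σ R)}
    {s m : σ →₀ ℕ} (hs : monomial s 1 ∈ I) (h : s ≤ m) (c : R) : monomial m c ∈ I :=
  I.mem_of_dvd (monomial_dvd_monomial.mpr ⟨.inr h, one_dvd c⟩) hs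

noncomputable def exponent (a b c e : ℕ) : Fin 4 →₀ ℕ := Finsupp.equivFunOnFinite.symm ![a, b, c, e]

@[simp] theorem exponent_apply (a b c e : ℕ) (i : Fin 4) : exponent a b c e i = ![a, b, c, e] i :=
  rfl

theorem exponent_eq (m : Fin 4 →₀ ℕ) : exponent (m 0) (m 1) (m 2) (m 3) = m := by
  ext i; fin_cases i <;> rfl

@[simp] theorem exponent_inj {a b c e a' b' c' e' : ℕ} :
    exponent a b c e = exponent a' b' c' e' ↔ a = a' ∧ b = b' ∧ c = c' ∧ e = e' := by
  simp [exponent]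

@[simp] theorem exponent_le_exponent {a b c e a' b' c' e' : ℕ} :
    exponent a b c e ≤ exponent a' b' c' e' ↔ a ≤ a' ∧ b ≤ b' ∧ c ≤ c' ∧ e ≤ e' := by
  simp [Finsupp.le_def, Fin.forall_fin_succ]

@[simp] theorem exponent_sub_exponent (a b c e a' b' c' e' : ℕ) :
    exponent a b c e - exponent a' b' c' e' = exponent (a - a') (b - b') (c - c') (e - e') := by
  ext i; fin_cases i <;> rfl

@[simp] theorem degree_exponent (a b c e : ℕ) : (exponent a b c e).degree = a + b + c + e := by
  rw [Finsupp.degree_eq_sum, Fin.sum_univ_four]; rfl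

theorem monomial_exponent {k : Type*} [CommSemiring k] (a b c e : ℕ) :
    monomial (exponent a b c e) (1 : k) = X 0 ^ a * X 1 ^ b * X 2 ^ c * X 3 ^ e := by
  have : exponent a b c e = .single 0 a + .single 1 b + .single 2 c + .single 3 e := by
    ext i; fin_cases i <;> simp
  simp only [this, X_pow_eq_monomial, monomial_mul, mul_one]

section GorensteinPoint

variable {k : Type*} [Field k]

variable (k) in
noncomputable def gorensteinIdeal : Ideal (MvPolynomial (Fin 4) k) :=
  Ideal.span {X 1 ^ 2, X 2 ^ 2, X 1 * X 2 - X 3 ^ 2, X 1 * X 3, X 2 * X 3}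

noncomputable def standardMonomial (n : ℕ) : Fin 5 → MvPolynomial (Fin 4) k :=
  ![monomial (exponent (n + 2) 0 0 0) 1, monomial (exponent (n + 1) 1 0 0) 1,
    monomial (exponent (n + 1) 0 1 0) 1, monomial (exponent (n + 1) 0 0 1) 1,
    monomial (exponent n 1 1 0) 1]

noncomputable def residueCoords (n : ℕ) : MvPolynomial (Fin 4) k →ₗ[k] Fin 5 → k :=
  LinearMap.pi ![lcoeff k (exponent (n + 2) 0 0 0), lcoeff k (exponent (n + 1) 1 0 0),
    lcoeff k (exponent (n + 1) 0 1 0), lcoeff k (exponent (n + 1) 0 0 1),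
    lcoeff k (exponent n 1 1 0) + lcoeff k (exponent n 0 0 2)]

theorem residueCoords_comp_standardMonomial (n : ℕ) :
    residueCoords n ∘ standardMonomial n = Pi.basisFun k (Fin 5) := by
  ext j i : 2
  fin_cases i <;> fin_cases j <;> simp [residueCoords, standardMonomial, coeff_monomial]

theorem gorensteinIdeal_le_ker_residueCoords (n : ℕ) :
    (gorensteinIdeal k).restrictScalars k ≤ LinearMap.ker (residueCoords n) := by
  refine span_restrictScalars_le_ker _ fun g hg f => ?_
  have h11 : (X 1 ^ 2 : MvPolynomial (Fin 4) k) = monomial (exponent 0 2 0 0) 1 := by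
    simp [monomial_exponent]
  have h22 : (X 2 ^ 2 : MvPolynomial (Fin 4) k) = monomial (exponent 0 0 2 0) 1 := by
    simp [monomial_exponent]
  have h33 : (X 3 ^ 2 : MvPolynomial (Fin 4) k) = monomial (exponent 0 0 0 2) 1 := by
    simp [monomial_exponent]
  have h12 : (X 1 * X 2 : MvPolynomial (Fin 4) k) = monomial (exponent 0 1 1 0) 1 := by
    simp [monomial_exponent]
  have h13 : (X 1 * X 3 : MvPolynomial (Fin 4) k) = monomial (exponent 0 1 0 1) 1 := by
    simp [monomial_exponent]
  have h23 : (X 2 * X 3 : MvPolynomial (Fin 4) k) = monomial (exponent 0 0 1 1) 1 := by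
    simp [monomial_exponent]
  rcases hg with rfl | rfl | rfl | rfl | rfl <;> ext i <;> fin_cases i <;>
    simp [residueCoords, h11, h22, h33, h12, h13, h23, mul_sub, coeff_mul_monomial']

theorem X_three_pow_three_mem_gorensteinIdeal :
    (X 3 ^ 3 : MvPolynomial (Fin 4) k) ∈ gorensteinIdeal k := by
  have : (X 3 ^ 3 : MvPolynomial (Fin 4) k) = X 2 * (X 1 * X 3) - X 3 * (X 1 * X 2 - X 3 ^ 2) := by
    ring
  rw [this]
  exact sub_mem (Ideal.mul_mem_left _ _ (Ideal.subset_span (by simp)))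
    (Ideal.mul_mem_left _ _ (Ideal.subset_span (by simp)))

theorem monomial_exponent_mem_gorensteinIdeal {a b c e : ℕ}
    (h : 2 ≤ b ∨ 2 ≤ c ∨ (1 ≤ b ∧ 1 ≤ e) ∨ (1 ≤ c ∧ 1 ≤ e) ∨ 3 ≤ e) :
    monomial (exponent a b c e) (1 : k) ∈ gorensteinIdeal k := by
  have hgen (s) (hs : monomial s (1 : k) ∈
      ({X 1 ^ 2, X 2 ^ 2, X 1 * X 2 - X 3 ^ 2, X 1 * X 3, X 2 * X 3} : Set _))
      (hle : s ≤ exponent a b c e) : monomial (exponent a b c e) (1 : k) ∈ gorensteinIdeal k :=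
    monomial_mem_of_le (Ideal.subset_span hs) hle 1
  rcases h with h | h | h | h | h
  · exact hgen (exponent 0 2 0 0) (by simp [monomial_exponent]) (by simp; omega)
  · exact hgen (exponent 0 0 2 0) (by simp [monomial_exponent]) (by simp; omega)
  · exact hgen (exponent 0 1 0 1) (by simp [monomial_exponent]) (by simp; omega)
  · exact hgen (exponent 0 0 1 1) (by simp [monomial_exponent]) (by simp; omega)
  · exact monomial_mem_of_le (s := exponent 0 0 0 3)
      (by simpa [monomial_exponent] using X_three_pow_three_mem_gorensteinIdeal) (by simp; omega) 1

open Submodule in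
theorem monomial_mem_span_standardMonomial_sup (n : ℕ) {m : Fin 4 →₀ ℕ} (hm : m.degree = n + 2) :
    monomial m 1 ∈
      span k (Set.range (standardMonomial n)) ⊔ (gorensteinIdeal k).restrictScalars k := by
  obtain ⟨a, b, c, e, rfl⟩ : ∃ a b c e, m = exponent a b c e := ⟨_, _, _, _, (exponent_eq m).symm⟩
  rw [degree_exponent] at hm
  have hS (j) : standardMonomial n j ∈
      span k (Set.range (standardMonomial (k := k) n)) ⊔ (gorensteinIdeal k).restrictScalars k :=
    mem_sup_left (subset_span ⟨j, rfl⟩)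
  obtain h | ⟨rfl, rfl, rfl⟩ | ⟨rfl, rfl, rfl⟩ | ⟨rfl, rfl, rfl⟩ | ⟨rfl, rfl, rfl⟩ |
      ⟨rfl, rfl, rfl⟩ | ⟨rfl, rfl, rfl⟩ :
      (2 ≤ b ∨ 2 ≤ c ∨ (1 ≤ b ∧ 1 ≤ e) ∨ (1 ≤ c ∧ 1 ≤ e) ∨ 3 ≤ e) ∨ (b = 0 ∧ c = 0 ∧ e = 0) ∨
      (b = 1 ∧ c = 0 ∧ e = 0) ∨ (b = 0 ∧ c = 1 ∧ e = 0) ∨ (b = 0 ∧ c = 0 ∧ e = 1) ∨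
      (b = 1 ∧ c = 1 ∧ e = 0) ∨ (b = 0 ∧ c = 0 ∧ e = 2) := by omega
  · exact mem_sup_right (monomial_exponent_mem_gorensteinIdeal h)
  · obtain rfl : a = n + 2 := by omega
    exact hS 0
  · obtain rfl : a = n + 1 := by omega
    exact hS 1
  · obtain rfl : a = n + 1 := by omega
    exact hS 2
  · obtain rfl : a = n + 1 := by omega
    exact hS 3
  · obtain rfl : n = a := by omega
    exact hS 4
  · obtain rfl : n = a := by omega
    have : monomial (exponent n 0 0 2) (1 : k) =
        standardMonomial n 4 - X 0 ^ n * (X 1 * X 2 - X 3 ^ 2) := by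
      simp [standardMonomial, monomial_exponent]; ring
    rw [this]
    exact sub_mem (hS 4) (mem_sup_right (Ideal.mul_mem_left _ _ (Ideal.subset_span (by simp))))

open Submodule in
theorem homogeneousSubmodule_le_span_standardMonomial_sup (n : ℕ) :
    homogeneousSubmodule (Fin 4) k (n + 2) ≤
      span k (Set.range (standardMonomial n)) ⊔ (gorensteinIdeal k).restrictScalars k := by
  intro p hp
  rw [← support_sum_monomial_coeff p]
  refine sum_mem fun m hm => ?_
  have hdeg : m.degree = n + 2 := by
    rw [Finsupp.degree_eq_weight_one]; exact hp (mem_support_iff.mp hm)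
  simpa [smul_monomial] using smul_mem _ (coeff m p) (monomial_mem_span_standardMonomial_sup n hdeg)

theorem standardMonomial_mem_homogeneousSubmodule (n : ℕ) (j : Fin 5) :
    standardMonomial (k := k) n j ∈ homogeneousSubmodule (Fin 4) k (n + 2) := by
  fin_cases j <;> exact isHomogeneous_monomial _ (by simp)

theorem hilbertFn_gorensteinIdeal (n : ℕ) : hilbertFn k (gorensteinIdeal k) (n + 2) = 5 := by
  have hli : LinearIndependent k (residueCoords n ∘ standardMonomial (k := k) n) := by
    rw [residueCoords_comp_standardMonomial]; exact (Pi.basisFun k (Fin 5)).linearIndependent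
  exact (finrank_quotient_comap_subtype_eq_card
    (standardMonomial_mem_homogeneousSubmodule (k := k) n)
    (homogeneousSubmodule_le_span_standardMonomial_sup n) (residueCoords n)
    (gorensteinIdeal_le_ker_residueCoords n) hli).trans (Fintype.card_fin 5)

end GorensteinPoint

/-- in `R = k[z₀,z₁,z₂,z₃]`, the ideal
`I = (z₁², z₂², z₁z₂ − z₃², z₁z₃, z₂z₃)` defines a zero-dimensional subscheme of `P³`
of degree `5`:  `dim_k (R/I)_d = 5` for all sufficiently large `d`. -/
theorem degree_five_gorenstein_point (k : Type*) [Field k] :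
    letI z : Fin 4 → MvPolynomial (Fin 4) k := X
    ∃ N : ℕ, ∀ d ≥ N,
      hilbertFn k (Ideal.span
        {z 1 ^ 2, z 2 ^ 2, z 1 * z 2 - z 3 ^ 2, z 1 * z 3, z 2 * z 3}) d = 5 := by
  refine ⟨2, fun d hd => ?_⟩
  obtain ⟨n, rfl⟩ := Nat.exists_eq_add_of_le' hd
  exact hilbertFn_gorensteinIdeal n
end

section
/- In R = k[z_0,z_1,z_2,z_3], the ideal of 2×2 minors of the matrix B = [[z_1, z_2, z_3, 0],[0, z_1, z_2, z_3]] has saturation (with respect to the irrelevant ideal) equal to (z_1, z_2, z_3)^2. -/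
open MvPolynomial

/-- in `R = k[z₀,z₁,z₂,z₃]`, the saturation (with respect to the
irrelevant maximal ideal `m = (z₀,z₁,z₂,z₃)`) of the ideal of `2×2` minors of
`B = [[z₁,z₂,z₃,0],[0,z₁,z₂,z₃]]` equals `(z₁,z₂,z₃)²`.  Membership in the
saturation is spelled out: `f ∈ I^sat ↔ ∃ N, m^N · f ⊆ I`. -/
theorem saturation_of_minors (k : Type*) [Field k] :
    letI R := MvPolynomial (Fin 4) k
    letI z : Fin 4 → R := X
    letI B : Matrix (Fin 2) (Fin 4) R := !![z 1, z 2, z 3, 0; 0, z 1, z 2, z 3]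
    letI Imin : Ideal R :=
      Ideal.span {d | ∃ c₁ c₂ : Fin 4, d = B 0 c₁ * B 1 c₂ - B 0 c₂ * B 1 c₁}
    letI m : Ideal R := Ideal.span (Set.range z)
    ∀ f : R, (∃ N : ℕ, ∀ g ∈ m ^ N, g * f ∈ Imin) ↔
      f ∈ (Ideal.span {z 1, z 2, z 3}) ^ 2 := by
  intro f
  classical
  set B : Matrix (Fin 2) (Fin 4) (MvPolynomial (Fin 4) k) :=
    !![X 1, X 2, X 3, 0; 0, X 1, X 2, X 3] with hBdef
  set Imin : Ideal (MvPolynomial (Fin 4) k) :=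
    Ideal.span {d | ∃ c₁ c₂ : Fin 4, d = B 0 c₁ * B 1 c₂ - B 0 c₂ * B 1 c₁} with hImin
  set m : Ideal (MvPolynomial (Fin 4) k) := Ideal.span (Set.range X) with hm
  set S : Set (Fin 4 →₀ ℕ) :=
    {s | ∃ a b : Fin 4, a ≠ 0 ∧ b ≠ 0 ∧ s = Finsupp.single a 1 + Finsupp.single b 1} with hS
  set M : Ideal (MvPolynomial (Fin 4) k) :=
    Ideal.span ((fun s => monomial s (1 : k)) '' S) with hM
  have hXmon : ∀ a b : Fin 4, (X a * X b : MvPolynomial (Fin 4) k)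
      = monomial (Finsupp.single a 1 + Finsupp.single b 1) (1 : k) := by
    intro a b
    rw [X, X, monomial_mul, one_mul]
  have hXXM : ∀ a b : Fin 4, a ≠ 0 → b ≠ 0 → (X a * X b : MvPolynomial (Fin 4) k) ∈ M := by
    intro a b ha hb
    rw [hXmon]
    exact Ideal.subset_span ⟨_, ⟨a, b, ha, hb, rfl⟩, rfl⟩
  have hne : ∀ a : Fin 4, a ≠ 0 →
      (X a : MvPolynomial (Fin 4) k) ∈ (Ideal.span {X 1, X 2, X 3}) := by
    intro a ha
    fin_cases a
    · exact absurd rfl ha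
    · exact Ideal.subset_span (by simp)
    · exact Ideal.subset_span (by simp)
    · exact Ideal.subset_span (by simp)
  have hMJ : M ≤ (Ideal.span {X 1, X 2, X 3} : Ideal (MvPolynomial (Fin 4) k)) ^ 2 := by
    rw [hM, Ideal.span_le]
    rintro x ⟨s, ⟨a, b, ha, hb, rfl⟩, rfl⟩
    show monomial (Finsupp.single a 1 + Finsupp.single b 1) (1 : k) ∈ _
    rw [← hXmon, sq]
    exact Ideal.mul_mem_mul (hne a ha) (hne b hb)
  have hB : ∀ i j : Fin 4, B 0 i * B 1 j ∈ M := by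
    intro i j
    fin_cases i <;> fin_cases j <;> simp only [hBdef] <;> norm_num <;>
      first
        | exact M.zero_mem
        | exact hXXM _ _ (by decide) (by decide)
  have hIminM : Imin ≤ M := by
    rw [hImin, Ideal.span_le]
    rintro d ⟨c₁, c₂, rfl⟩
    exact M.sub_mem (hB c₁ c₂) (hB c₂ c₁)
  have hmin : ∀ c₁ c₂ : Fin 4, B 0 c₁ * B 1 c₂ - B 0 c₂ * B 1 c₁ ∈ Imin := fun c₁ c₂ =>
    Ideal.subset_span ⟨c₁, c₂, rfl⟩
  have h11 : (X 1 * X 1 : MvPolynomial (Fin 4) k) ∈ Imin := by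
    have h := hmin 0 1; simpa [hBdef] using h
  have h12 : (X 1 * X 2 : MvPolynomial (Fin 4) k) ∈ Imin := by
    have h := hmin 0 2; simpa [hBdef] using h
  have h13 : (X 1 * X 3 : MvPolynomial (Fin 4) k) ∈ Imin := by
    have h := hmin 0 3; simpa [hBdef] using h
  have h23 : (X 2 * X 3 : MvPolynomial (Fin 4) k) ∈ Imin := by
    have h := hmin 1 3; simpa [hBdef] using h
  have h33 : (X 3 * X 3 : MvPolynomial (Fin 4) k) ∈ Imin := by
    have h := hmin 2 3; simpa [hBdef] using h
  have h22 : (X 2 * X 2 : MvPolynomial (Fin 4) k) ∈ Imin := by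
    have h := Imin.add_mem (hmin 1 2) h13
    have e : B 0 1 * B 1 2 - B 0 2 * B 1 1 + X 1 * X 3
        = (X 2 * X 2 : MvPolynomial (Fin 4) k) := by
      simp [hBdef]; ring
    rwa [e] at h
  have hJI : (Ideal.span {X 1, X 2, X 3} : Ideal (MvPolynomial (Fin 4) k)) ^ 2 ≤ Imin := by
    rw [sq, Ideal.span_mul_span', Ideal.span_le]
    rintro x hx
    rw [Set.mem_mul] at hx
    obtain ⟨a, ha, b, hb, rfl⟩ := hx
    simp only [Set.mem_insert_iff, Set.mem_singleton_iff] at ha hb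
    rcases ha with rfl | rfl | rfl <;> rcases hb with rfl | rfl | rfl
    · exact h11
    · exact h12
    · exact h13
    · rwa [mul_comm]
    · exact h22
    · exact h23
    · rwa [mul_comm]
    · rwa [mul_comm]
    · exact h33
  constructor
  · rintro ⟨N, hN⟩
    have hz0 : (X 0 : MvPolynomial (Fin 4) k) ∈ m := by
      rw [hm]; exact Ideal.subset_span (Set.mem_range_self 0)
    have hfM : (X 0 : MvPolynomial (Fin 4) k) ^ N * f ∈ M :=
      hIminM (hN _ (Ideal.pow_mem_pow hz0 N))
    rw [hM, mem_ideal_span_monomial_image] at hfM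
    have hf : f ∈ M := by
      rw [hM, mem_ideal_span_monomial_image]
      intro xi hxi
      have hx : Finsupp.single (0 : Fin 4) N + xi ∈
          ((X 0 : MvPolynomial (Fin 4) k) ^ N * f).support := by
        rw [mem_support_iff] at hxi ⊢
        rwa [X_pow_eq_monomial, coeff_monomial_mul, one_mul]
      obtain ⟨s, hsS, hle⟩ := hfM _ hx
      refine ⟨s, hsS, ?_⟩
      obtain ⟨a, b, ha, hb, rfl⟩ := hsS
      rw [Finsupp.le_def] at hle ⊢
      intro i
      rcases eq_or_ne i 0 with rfl | hi
      · simp [Finsupp.single_apply, ha, hb]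
      · have h := hle i
        simpa [Finsupp.single_apply, Ne.symm hi] using h
    exact hMJ hf
  · intro hf
    exact ⟨0, fun g _ => Imin.mul_mem_left g (hJI hf)⟩
end

section
/- In R = k[z_0,…,z_5], let I_F = (z_3z_4 − z_0z_5, z_1z_4 − z_3z_5, z_2z_3 − z_4z_5, z_1z_2 − z_5^2, z_0z_2 − z_4^2, z_0z_1 − z_3^2) be the ideal of 2×2 minors of the symmetric matrix [[z_0,z_3,z_4],[z_3,z_1,z_5],[z_4,z_5,z_2]], let I_L = (z_1,z_2,z_3,z_4) and I_H = (z_0,z_3,z_4). Then the ideal I = (z_1z_4 − z_3z_5, z_2z_3 − z_4z_5, z_0z_2 − z_4^2, z_0z_1 − z_3^2, z_3z_4^2 − z_0z_4z_5, z_3^2z_4 − z_0z_3z_5) satisfies I = I_F ∩ I_L ∩ I_H. -/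
open MvPolynomial


namespace SectionIdealAux

/-- combination helper -/
lemma comb2 {A : Type*} [CommRing A] {S : Ideal A} {u v : A} (hu : u ∈ S) (hv : v ∈ S)
    {x : A} (a b : A) (h : x = a * u + b * v) : x ∈ S :=
  h ▸ S.add_mem (S.mul_mem_left a hu) (S.mul_mem_left b hv)

lemma comb1 {A : Type*} [CommRing A] {S : Ideal A} {u : A} (hu : u ∈ S)
    {x : A} (a : A) (h : x = a * u) : x ∈ S :=
  h ▸ S.mul_mem_left a hu

lemma aeval_mem_span {k : Type*} [CommSemiring k]
    (φ : MvPolynomial (Fin 6) k →ₐ[k] MvPolynomial (Fin 6) k)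
    {s : Set (MvPolynomial (Fin 6) k)} {Q : Ideal (MvPolynomial (Fin 6) k)}
    (h : ∀ g ∈ s, φ g ∈ Q) {x : MvPolynomial (Fin 6) k} (hx : x ∈ Ideal.span s) : φ x ∈ Q := by
  refine Submodule.span_induction (p := fun y _ => φ y ∈ Q) (fun g hg => h g hg)
    (by show φ 0 ∈ Q; simp)
    (fun a b _ _ ha hb => by show φ (a + b) ∈ Q; rw [map_add]; exact Q.add_mem ha hb)
    (fun r m _ hm => ?_) hx
  show φ (r • m) ∈ Q
  rw [smul_eq_mul, map_mul]; exact Q.mul_mem_left _ hm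

lemma sub_aeval_mem {k : Type*} [CommRing k] (P : Ideal (MvPolynomial (Fin 6) k))
    (φ : MvPolynomial (Fin 6) k →ₐ[k] MvPolynomial (Fin 6) k)
    (hφ : ∀ i, X i - φ (X i) ∈ P) (f : MvPolynomial (Fin 6) k) : f - φ f ∈ P := by
  have h : (Ideal.Quotient.mkₐ k P).comp φ = Ideal.Quotient.mkₐ k P := by
    apply MvPolynomial.algHom_ext
    intro i
    simp only [AlgHom.comp_apply, Ideal.Quotient.mkₐ_eq_mk]
    exact (Ideal.Quotient.eq.mpr (by simpa [neg_sub] using P.neg_mem (hφ i)))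
  have h2 := DFunLike.congr_fun h f
  simp only [AlgHom.comp_apply, Ideal.Quotient.mkₐ_eq_mk] at h2
  exact Ideal.Quotient.eq.mp h2.symm

noncomputable def rho (k : Type*) [CommSemiring k] :
    MvPolynomial (Fin 6) k →ₐ[k] MvPolynomial (Fin 6) k :=
  aeval fun i => match i with
    | 0 => X 0 | 1 => X 1 | 2 => X 2 | 3 => 0 | 4 => 0 | 5 => X 5

noncomputable def sigma' (k : Type*) [CommSemiring k] :
    MvPolynomial (Fin 6) k →ₐ[k] MvPolynomial (Fin 6) k :=
  aeval fun i => match i with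
    | 0 => X 0 | 1 => 0 | 2 => 0 | 3 => X 3 | 4 => X 4 | 5 => X 5

noncomputable def tau (k : Type*) [CommSemiring k] :
    MvPolynomial (Fin 6) k →ₐ[k] MvPolynomial (Fin 6) k :=
  aeval fun i => match i with
    | 0 => 0 | 1 => X 1 | 2 => X 2 | 3 => X 3 | 4 => X 4 | 5 => X 5

set_option maxHeartbeats 4000000 in
theorem main (k : Type*) [Field k] :
    (Ideal.span {X 1 * X 4 - X 3 * X 5, X 2 * X 3 - X 4 * X 5, X 0 * X 2 - X 4 ^ 2,
      X 0 * X 1 - X 3 ^ 2, X 3 * X 4 ^ 2 - X 0 * X 4 * X 5, X 3 ^ 2 * X 4 - X 0 * X 3 * X 5} :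
      Ideal (MvPolynomial (Fin 6) k)) =
    Ideal.span {X 3 * X 4 - X 0 * X 5, X 1 * X 4 - X 3 * X 5, X 2 * X 3 - X 4 * X 5,
      X 1 * X 2 - X 5 ^ 2, X 0 * X 2 - X 4 ^ 2, X 0 * X 1 - X 3 ^ 2} ⊓
    Ideal.span {X 1, X 2, X 3, X 4} ⊓ Ideal.span {X 0, X 3, X 4} := by
  -- names
  set R := MvPolynomial (Fin 6) k
  set g1 : R := X 1 * X 4 - X 3 * X 5 with hg1def
  set g2 : R := X 2 * X 3 - X 4 * X 5 with hg2def
  set g3 : R := X 0 * X 2 - X 4 ^ 2 with hg3def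
  set g4 : R := X 0 * X 1 - X 3 ^ 2 with hg4def
  set g5 : R := X 3 * X 4 ^ 2 - X 0 * X 4 * X 5 with hg5def
  set g6 : R := X 3 ^ 2 * X 4 - X 0 * X 3 * X 5 with hg6def
  set f1 : R := X 3 * X 4 - X 0 * X 5 with hf1def
  set f4 : R := X 1 * X 2 - X 5 ^ 2 with hf4def
  set I : Ideal R := Ideal.span {g1, g2, g3, g4, g5, g6} with hIdef
  set IF : Ideal R := Ideal.span {f1, g1, g2, f4, g3, g4} with hIFdef
  set IL : Ideal R := Ideal.span {X 1, X 2, X 3, X 4} with hILdef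
  set IH : Ideal R := Ideal.span {X 0, X 3, X 4} with hIHdef
  -- basic generator memberships
  have hg1 : g1 ∈ I := Ideal.subset_span (by simp)
  have hg2 : g2 ∈ I := Ideal.subset_span (by simp)
  have hg3 : g3 ∈ I := Ideal.subset_span (by simp)
  have hg4 : g4 ∈ I := Ideal.subset_span (by simp)
  have hg5 : g5 ∈ I := Ideal.subset_span (by simp)
  have hg6 : g6 ∈ I := Ideal.subset_span (by simp)
  have hL1 : (X 1 : R) ∈ IL := Ideal.subset_span (by simp)
  have hL2 : (X 2 : R) ∈ IL := Ideal.subset_span (by simp)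
  have hL3 : (X 3 : R) ∈ IL := Ideal.subset_span (by simp)
  have hL4 : (X 4 : R) ∈ IL := Ideal.subset_span (by simp)
  have hH0 : (X 0 : R) ∈ IH := Ideal.subset_span (by simp)
  have hH3 : (X 3 : R) ∈ IH := Ideal.subset_span (by simp)
  have hH4 : (X 4 : R) ∈ IH := Ideal.subset_span (by simp)
  -- cross products lemmas
  have c31 : (X 3 : R) * f1 ∈ I := comb1 hg6 1 (by rw [hf1def, hg6def]; ring)
  have c41 : (X 4 : R) * f1 ∈ I := comb1 hg5 1 (by rw [hf1def, hg5def]; ring)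
  have c11 : (X 1 : R) * f1 ∈ I := comb2 hg1 hg4 (X 3) (-(X 5)) (by rw [hf1def, hg1def, hg4def]; ring)
  have c21 : (X 2 : R) * f1 ∈ I := comb2 hg2 hg3 (X 4) (-(X 5)) (by rw [hf1def, hg2def, hg3def]; ring)
  have c34 : (X 3 : R) * f4 ∈ I := comb2 hg2 hg1 (X 1) (X 5) (by rw [hf4def, hg2def, hg1def]; ring)
  have c44 : (X 4 : R) * f4 ∈ I := comb2 hg1 hg2 (X 2) (X 5) (by rw [hf4def, hg1def, hg2def]; ring)
  have c04 : (X 0 : R) * f4 - X 5 * f1 ∈ I :=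
    comb2 hg4 hg2 (X 2) (X 3) (by rw [hf4def, hf1def, hg4def, hg2def]; ring)
  refine le_antisymm (le_inf (le_inf ?_ ?_) ?_) ?_
  · -- I ≤ IF
    rw [hIdef, Ideal.span_le]
    rintro x hx
    simp only [Set.mem_insert_iff, Set.mem_singleton_iff] at hx
    have hF1 : f1 ∈ IF := Ideal.subset_span (by simp)
    rcases hx with rfl | rfl | rfl | rfl | rfl | rfl
    · exact Ideal.subset_span (by simp)
    · exact Ideal.subset_span (by simp)
    · exact Ideal.subset_span (by simp)
    · exact Ideal.subset_span (by simp)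
    · exact comb1 hF1 (X 4) (by rw [hg5def, hf1def]; ring)
    · exact comb1 hF1 (X 3) (by rw [hg6def, hf1def]; ring)
  · -- I ≤ IL
    rw [hIdef, Ideal.span_le]
    rintro x hx
    simp only [Set.mem_insert_iff, Set.mem_singleton_iff] at hx
    rcases hx with rfl | rfl | rfl | rfl | rfl | rfl
    · exact comb2 hL4 hL3 (X 1) (-(X 5)) (by rw [hg1def]; ring)
    · exact comb2 hL3 hL4 (X 2) (-(X 5)) (by rw [hg2def]; ring)
    · exact comb2 hL2 hL4 (X 0) (-(X 4)) (by rw [hg3def]; ring)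
    · exact comb2 hL1 hL3 (X 0) (-(X 3)) (by rw [hg4def]; ring)
    · exact comb2 hL3 hL4 (X 4 ^ 2) (-(X 0 * X 5)) (by rw [hg5def]; ring)
    · exact comb2 hL3 hL3 (X 3 * X 4) (-(X 0 * X 5)) (by rw [hg6def]; ring)
  · -- I ≤ IH
    rw [hIdef, Ideal.span_le]
    rintro x hx
    simp only [Set.mem_insert_iff, Set.mem_singleton_iff] at hx
    rcases hx with rfl | rfl | rfl | rfl | rfl | rfl
    · exact comb2 hH4 hH3 (X 1) (-(X 5)) (by rw [hg1def]; ring)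
    · exact comb2 hH3 hH4 (X 2) (-(X 5)) (by rw [hg2def]; ring)
    · exact comb2 hH0 hH4 (X 2) (-(X 4)) (by rw [hg3def]; ring)
    · exact comb2 hH0 hH3 (X 1) (-(X 3)) (by rw [hg4def]; ring)
    · exact comb2 hH3 hH4 (X 4 ^ 2) (-(X 0 * X 5)) (by rw [hg5def]; ring)
    · exact comb2 hH3 hH3 (X 3 * X 4) (-(X 0 * X 5)) (by rw [hg6def]; ring)
  · -- hard direction
    rintro x ⟨⟨hF, hL⟩, hH⟩
    -- values of the substitution maps on variables
    have hrX0 : rho k (X 0 : R) = X 0 := by simp [rho]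
    have hrX1 : rho k (X 1 : R) = X 1 := by simp [rho]
    have hrX2 : rho k (X 2 : R) = X 2 := by simp [rho]
    have hrX3 : rho k (X 3 : R) = 0 := by simp [rho]
    have hrX4 : rho k (X 4 : R) = 0 := by simp [rho]
    have hrX5 : rho k (X 5 : R) = X 5 := by simp [rho]
    have hsX0 : sigma' k (X 0 : R) = X 0 := by simp [sigma']
    have hsX1 : sigma' k (X 1 : R) = 0 := by simp [sigma']
    have hsX2 : sigma' k (X 2 : R) = 0 := by simp [sigma']
    have hsX5 : sigma' k (X 5 : R) = X 5 := by simp [sigma']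
    have hrr : ∀ f : R, rho k (rho k f) = rho k f := by
      intro f
      have h : (rho k).comp (rho k) = rho k := by
        apply MvPolynomial.algHom_ext; intro i; fin_cases i <;> simp [rho]
      exact DFunLike.congr_fun h f
    have hsub34 : ∀ f : R, f - rho k f ∈ Ideal.span {(X 3 : R), X 4} := by
      intro f
      apply sub_aeval_mem
      intro i; fin_cases i
      · simp [rho]
      · simp [rho]
      · simp [rho]
      · rw [show ((X ⟨3, by norm_num⟩ : R) - rho k (X ⟨3, by norm_num⟩)) = X 3 by
          simp [rho]]
        exact Ideal.subset_span (by simp)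
      · rw [show ((X ⟨4, by norm_num⟩ : R) - rho k (X ⟨4, by norm_num⟩)) = X 4 by
          simp [rho]]
        exact Ideal.subset_span (by simp)
      · simp [rho]
    have hsub12 : ∀ f : R, f - sigma' k f ∈ Ideal.span {(X 1 : R), X 2} := by
      intro f
      apply sub_aeval_mem
      intro i; fin_cases i
      · simp [sigma']
      · rw [show ((X ⟨1, by norm_num⟩ : R) - sigma' k (X ⟨1, by norm_num⟩)) = X 1 by
          simp [sigma']]
        exact Ideal.subset_span (by simp)
      · rw [show ((X ⟨2, by norm_num⟩ : R) - sigma' k (X ⟨2, by norm_num⟩)) = X 2 by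
          simp [sigma']]
        exact Ideal.subset_span (by simp)
      · simp [sigma']
      · simp [sigma']
      · simp [sigma']
    have hsub0 : ∀ f : R, f - tau k f ∈ Ideal.span {(X 0 : R)} := by
      intro f
      apply sub_aeval_mem
      intro i; fin_cases i
      · rw [show ((X ⟨0, by norm_num⟩ : R) - tau k (X ⟨0, by norm_num⟩)) = X 0 by
          simp [tau]]
        exact Ideal.subset_span (by simp)
      · simp [tau]
      · simp [tau]
      · simp [tau]
      · simp [tau]
      · simp [tau]
    -- the auxiliary ideal B = I + (z3, z4)
    set B : Ideal R := Ideal.span {g1, g2, g3, g4, g5, g6, X 3, X 4} with hBdef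
    have hIB : I ≤ B := by
      rw [hIdef, Ideal.span_le]
      rintro y hy
      simp only [Set.mem_insert_iff, Set.mem_singleton_iff] at hy
      rcases hy with rfl | rfl | rfl | rfl | rfl | rfl
      · exact Ideal.subset_span (by simp)
      · exact Ideal.subset_span (by simp)
      · exact Ideal.subset_span (by simp)
      · exact Ideal.subset_span (by simp)
      · exact Ideal.subset_span (by simp)
      · exact Ideal.subset_span (by simp)
    have hB3 : (X 3 : R) ∈ B := Ideal.subset_span (by simp)
    have hB4 : (X 4 : R) ∈ B := Ideal.subset_span (by simp)
    have hρB : ∀ y ∈ B, rho k y ∈ Ideal.span {(X 0 : R) * X 1, X 0 * X 2} := by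
      intro y hy
      rw [hBdef] at hy
      refine aeval_mem_span (rho k) ?_ hy
      rintro g hg
      simp only [Set.mem_insert_iff, Set.mem_singleton_iff] at hg
      rcases hg with rfl | rfl | rfl | rfl | rfl | rfl | rfl | rfl
      · rw [hg1def]; simp [rho]
      · rw [hg2def]; simp [rho]
      · rw [hg3def]
        rw [show rho k (X 0 * X 2 - X 4 ^ 2 : R) = X 0 * X 2 by simp [rho]]
        exact Ideal.subset_span (by simp)
      · rw [hg4def]
        rw [show rho k (X 0 * X 1 - X 3 ^ 2 : R) = X 0 * X 1 by simp [rho]]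
        exact Ideal.subset_span (by simp)
      · rw [hg5def]; simp [rho]
      · rw [hg6def]; simp [rho]
      · simp [rho]
      · simp [rho]
    -- multiplication helpers
    have hmul1 : ∀ r : R, r ∈ Ideal.span {(X 3 : R), X 4} → r * f1 ∈ I := by
      intro r hr
      obtain ⟨u', v', h'⟩ := Ideal.mem_span_pair.mp hr
      exact comb2 c31 c41 u' v' (by rw [← h']; ring)
    have hmul4 : ∀ r : R, r ∈ Ideal.span {(X 3 : R), X 4} → r * f4 ∈ I := by
      intro r hr
      obtain ⟨u', v', h'⟩ := Ideal.mem_span_pair.mp hr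
      exact comb2 c34 c44 u' v' (by rw [← h']; ring)
    -- Step A : decompose x using IF ≤ I + (f1, f4)
    have hIFle : IF ≤ I ⊔ Ideal.span {f1, f4} := by
      rw [hIFdef, Ideal.span_le]
      rintro y hy
      simp only [Set.mem_insert_iff, Set.mem_singleton_iff] at hy
      rcases hy with rfl | rfl | rfl | rfl | rfl | rfl
      · exact Submodule.mem_sup_right (Ideal.subset_span (by simp))
      · exact Submodule.mem_sup_left hg1
      · exact Submodule.mem_sup_left hg2
      · exact Submodule.mem_sup_right (Ideal.subset_span (by simp))
      · exact Submodule.mem_sup_left hg3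
      · exact Submodule.mem_sup_left hg4
    obtain ⟨i0, hi0, w, hw, hx1⟩ := Submodule.mem_sup.mp (hIFle hF)
    obtain ⟨a, b, hab⟩ := Ideal.mem_span_pair.mp hw
    -- Step B : x ∈ B
    rw [hILdef] at hL
    rw [hIHdef] at hH
    have hρxL : rho k x ∈ Ideal.span {(X 1 : R), X 2} := by
      refine aeval_mem_span (rho k) ?_ hL
      rintro g hg
      simp only [Set.mem_insert_iff, Set.mem_singleton_iff] at hg
      rcases hg with rfl | rfl | rfl | rfl
      · rw [hrX1]; exact Ideal.subset_span (by simp)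
      · rw [hrX2]; exact Ideal.subset_span (by simp)
      · rw [hrX3]; simp
      · rw [hrX4]; simp
    have hρxH : rho k x ∈ Ideal.span {(X 0 : R)} := by
      refine aeval_mem_span (rho k) ?_ hH
      rintro g hg
      simp only [Set.mem_insert_iff, Set.mem_singleton_iff] at hg
      rcases hg with rfl | rfl | rfl
      · rw [hrX0]; exact Ideal.subset_span (by simp)
      · rw [hrX3]; simp
      · rw [hrX4]; simp
    obtain ⟨w0, hw0⟩ := Ideal.mem_span_singleton'.mp hρxH
    obtain ⟨p, q, hpq⟩ := Ideal.mem_span_pair.mp hρxL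
    have hσ : sigma' k w0 * X 0 = 0 := by
      have h := congrArg (sigma' k) (hw0.trans hpq.symm)
      simpa [map_add, map_mul, hsX0, hsX1, hsX2] using h
    have hw0' : sigma' k w0 = 0 := by
      rcases mul_eq_zero.mp hσ with h | h
      · exact h
      · exact absurd h (X_ne_zero _)
    have hw0mem : w0 ∈ Ideal.span {(X 1 : R), X 2} := by
      have h := hsub12 w0; rwa [hw0', sub_zero] at h
    obtain ⟨u, v, huv⟩ := Ideal.mem_span_pair.mp hw0mem
    have h01 : (X 0 : R) * X 1 ∈ B := comb2 (hIB hg4) hB3 1 (X 3) (by rw [hg4def]; ring)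
    have h02 : (X 0 : R) * X 2 ∈ B := comb2 (hIB hg3) hB4 1 (X 4) (by rw [hg3def]; ring)
    have hρxB : rho k x ∈ B :=
      comb2 h01 h02 u v (by rw [← hw0, ← huv]; ring)
    have hxB : x ∈ B := by
      have e : x = (x - rho k x) + rho k x := by ring
      rw [e]
      refine B.add_mem ?_ hρxB
      have hle : Ideal.span {(X 3 : R), X 4} ≤ B := by
        rw [Ideal.span_le]
        rintro y hy
        simp only [Set.mem_insert_iff, Set.mem_singleton_iff] at hy
        rcases hy with rfl | rfl
        · exact hB3
        · exact hB4
      exact hle (hsub34 x)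
    -- Step C : w ∈ B
    have hwB : w ∈ B := by
      have e : w = x - i0 := by rw [← hx1]; ring
      rw [e]; exact B.sub_mem hxB (hIB hi0)
    -- Step D : reduce to a' * f1 + b' * f4
    set a' : R := rho k a with ha'def
    set b' : R := rho k b with hb'def
    have hra' : rho k a' = a' := hrr a
    have hrb' : rho k b' = b' := hrr b
    have hw' : w - (a' * f1 + b' * f4) ∈ I := by
      have h1 := hmul1 (a - a') (by rw [ha'def]; exact hsub34 a)
      have h4 := hmul4 (b - b') (by rw [hb'def]; exact hsub34 b)
      exact comb2 h1 h4 1 1 (by rw [← hab]; ring)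
    have hw'B : a' * f1 + b' * f4 ∈ B := by
      have e : a' * f1 + b' * f4 = w - (w - (a' * f1 + b' * f4)) := by ring
      rw [e]; exact B.sub_mem hwB (hIB hw')
    have hρw' : rho k (a' * f1 + b' * f4) ∈ Ideal.span {(X 0 : R) * X 1, X 0 * X 2} :=
      hρB _ hw'B
    have hρw'eq : rho k (a' * f1 + b' * f4)
        = a' * (0 - X 0 * X 5) + b' * (X 1 * X 2 - X 5 ^ 2) := by
      rw [hf1def, hf4def]
      simp only [map_add, map_mul, map_sub, map_pow, hrX0, hrX1, hrX2, hrX3, hrX4, hrX5,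
        hra', hrb', zero_mul, mul_zero]
    rw [hρw'eq] at hρw'
    have hτ0 : tau k (a' * (0 - X 0 * X 5) + b' * (X 1 * X 2 - X 5 ^ 2)) ∈ (⊥ : Ideal R) := by
      refine aeval_mem_span (tau k) ?_ hρw'
      rintro g hg
      simp only [Set.mem_insert_iff, Set.mem_singleton_iff] at hg
      rcases hg with rfl | rfl
      · simp [tau]
      · simp [tau]
    have hτ : tau k b' * (X 1 * X 2 - X 5 ^ 2) = 0 := by
      have e : tau k (a' * (0 - X 0 * X 5) + b' * (X 1 * X 2 - X 5 ^ 2))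
          = tau k b' * (X 1 * X 2 - X 5 ^ 2) := by
        simp [tau]
      rw [← e]
      exact Ideal.mem_bot.mp hτ0
    have hf4ne : (X 1 * X 2 - X 5 ^ 2 : R) ≠ 0 := by
      intro h
      have h2 := congrArg (eval fun i : Fin 6 => if i = 5 then (1 : k) else 0) h
      simp at h2
    have hτb' : tau k b' = 0 := by
      rcases mul_eq_zero.mp hτ with h | h
      · exact h
      · exact absurd h hf4ne
    have hb'0 : b' ∈ Ideal.span {(X 0 : R)} := by
      have h := hsub0 b'; rwa [hτb', sub_zero] at h
    obtain ⟨c, hc⟩ := Ideal.mem_span_singleton'.mp hb'0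
    have hb'f4 : b' * f4 - (c * X 5) * f1 ∈ I := comb1 c04 c (by rw [← hc]; ring)
    have hγf1B : (a' + c * X 5) * f1 ∈ B := by
      have e : (a' + c * X 5) * f1
          = (a' * f1 + b' * f4) - (b' * f4 - (c * X 5) * f1) := by ring
      rw [e]; exact B.sub_mem hw'B (hIB hb'f4)
    set δ : R := rho k (a' + c * X 5) with hδdef
    have hδsub : (a' + c * X 5) - δ ∈ Ideal.span {(X 3 : R), X 4} := by
      rw [hδdef]; exact hsub34 (a' + c * X 5)
    have hδf1B : δ * f1 ∈ B := by
      have h := hmul1 ((a' + c * X 5) - δ) hδsub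
      have e : δ * f1 = (a' + c * X 5) * f1 - ((a' + c * X 5) - δ) * f1 := by ring
      rw [e]; exact B.sub_mem hγf1B (hIB h)
    have hρδ : rho k (δ * f1) ∈ Ideal.span {(X 0 : R) * X 1, X 0 * X 2} := hρB _ hδf1B
    have hρδeq : rho k (δ * f1) = δ * (0 - X 0 * X 5) := by
      rw [hf1def, hδdef]
      simp only [map_mul, map_sub, hrX0, hrX3, hrX4, hrX5, hrr, zero_mul, mul_zero]
    rw [hρδeq] at hρδ
    have hρδ' : δ * (X 0 * X 5) ∈ Ideal.span {(X 0 : R) * X 1, X 0 * X 2} := by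
      have e : δ * (X 0 * X 5) = -(δ * (0 - X 0 * X 5)) := by ring
      rw [e]; exact neg_mem hρδ
    obtain ⟨p', q', hpq'⟩ := Ideal.mem_span_pair.mp hρδ'
    have hcanc : p' * X 1 + q' * X 2 = δ * X 5 := by
      have h2 : X 0 * (p' * X 1 + q' * X 2) = X 0 * (δ * X 5) := by linear_combination hpq'
      exact mul_left_cancel₀ (X_ne_zero 0) h2
    have hσδ : sigma' k δ * X 5 = 0 := by
      have h := congrArg (sigma' k) hcanc
      simpa [map_add, map_mul, hsX1, hsX2, hsX5] using h
    have hσδ0 : sigma' k δ = 0 := by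
      rcases mul_eq_zero.mp hσδ with h | h
      · exact h
      · exact absurd h (X_ne_zero _)
    have hδ12 : δ ∈ Ideal.span {(X 1 : R), X 2} := by
      have h := hsub12 δ; rwa [hσδ0, sub_zero] at h
    obtain ⟨u', v', huv'⟩ := Ideal.mem_span_pair.mp hδ12
    have hδf1I : δ * f1 ∈ I := comb2 c11 c21 u' v' (by rw [← huv']; ring)
    have hγf1I : (a' + c * X 5) * f1 ∈ I := by
      have h := hmul1 ((a' + c * X 5) - δ) hδsub
      have e : (a' + c * X 5) * f1 = ((a' + c * X 5) - δ) * f1 + δ * f1 := by ring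
      rw [e]; exact I.add_mem h hδf1I
    have hw'I : a' * f1 + b' * f4 ∈ I := by
      have e : a' * f1 + b' * f4 = (a' + c * X 5) * f1 + (b' * f4 - (c * X 5) * f1) := by ring
      rw [e]; exact I.add_mem hγf1I hb'f4
    have hwI : w ∈ I := by
      have e : w = (w - (a' * f1 + b' * f4)) + (a' * f1 + b' * f4) := by ring
      rw [e]; exact I.add_mem hw' hw'I
    rw [← hx1]
    exact I.add_mem hi0 hwI

end SectionIdealAux

/-- in `R = k[z₀,…,z₅]`, with `I_F` the ideal of `2×2` minors of the
symmetric matrix `[[z₀,z₃,z₄],[z₃,z₁,z₅],[z₄,z₅,z₂]]` (the Veronese surface),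
`I_L = (z₁,z₂,z₃,z₄)` and `I_H = (z₀,z₃,z₄)`, the ideal
`I = (z₁z₄−z₃z₅, z₂z₃−z₄z₅, z₀z₂−z₄², z₀z₁−z₃², z₃z₄²−z₀z₄z₅, z₃²z₄−z₀z₃z₅)`
satisfies `I = I_F ∩ I_L ∩ I_H`. -/
theorem section_ideal_decomposition (k : Type*) [Field k] :
    letI R := MvPolynomial (Fin 6) k
    letI z : Fin 6 → R := X
    letI IF : Ideal R := Ideal.span
      {z 3 * z 4 - z 0 * z 5, z 1 * z 4 - z 3 * z 5, z 2 * z 3 - z 4 * z 5,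
       z 1 * z 2 - z 5 ^ 2, z 0 * z 2 - z 4 ^ 2, z 0 * z 1 - z 3 ^ 2}
    letI IL : Ideal R := Ideal.span {z 1, z 2, z 3, z 4}
    letI IH : Ideal R := Ideal.span {z 0, z 3, z 4}
    (Ideal.span
      {z 1 * z 4 - z 3 * z 5, z 2 * z 3 - z 4 * z 5, z 0 * z 2 - z 4 ^ 2,
       z 0 * z 1 - z 3 ^ 2, z 3 * z 4 ^ 2 - z 0 * z 4 * z 5,
       z 3 ^ 2 * z 4 - z 0 * z 3 * z 5} : Ideal R) = IF ⊓ IL ⊓ IH := by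
  exact SectionIdealAux.main k
end
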